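/- (Weak congruence modulo i guarantees equal values at i.) Let α be a type with decidable equality, β a type, i : α, and let a, b : α → β be weakly congruent modulo i. Then a i = b i. -/
import Mathlib

/-- One-step relation avoiding index `i`. -/
def stepMod {α β : Type*} [DecidableEq α] (i : α) (a b : α → β) : Prop :=
  ∃ j : α, j ≠ i ∧ ∃ v : β,
    a = Function.update b j v ∨ b = Function.update a j v

/-- `a` and `b` are weakly equivalent modulo `i`. -/
def WeakEqMod {α β : Type*} [DecidableEq α] (i : α) (a b : α → β) : Prop :=
  Relation.ReflTransGen (stepMod i) a b

/-- `a` and `b` are weakly congruent modulo `i`. -/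
def WeakCongMod {α β : Type*} [DecidableEq α] (i : α) (a b : α → β) : Prop :=
  WeakEqMod i a b ∨
    ∃ a' b' : α → β, WeakEqMod i a a' ∧ a' i = b' i ∧ WeakEqMod i b' b

lemma weakeq_select_eq {α β : Type*} [DecidableEq α] (i : α)
    (a b : α → β) (h : WeakEqMod i a b) : a i = b i := by
  induction h with
  | refl => rfl
  | tail _ hstep ih =>
    obtain ⟨j, hj, v, hc | hc⟩ := hstep <;> rw [ih, hc]
    · exact Function.update_of_ne (Ne.symm hj) _ _
    · exact (Function.update_of_ne (Ne.symm hj) _ _).symm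

theorem weakcong_select_eq {α β : Type*} [DecidableEq α] (i : α)
    (a b : α → β) (h : WeakCongMod i a b) : a i = b i := by
  rcases h with h | ⟨a', b', h1, h2, h3⟩
  · exact weakeq_select_eq i a b h
  · rw [weakeq_select_eq i a a' h1, h2, weakeq_select_eq i b' b h3]
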